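/- Let (Ω, 𝓕, P) be a probability space, d ≥ 1, and β^t ∈ ℝ^d (Euclidean norm) with at least one nonzero coordinate; set β^s = min{|β^t_i| : β^t_i ≠ 0} and fix 0 < δ < β^s. For v ∈ ℝ^d write ‖v‖₀ for the number of nonzero coordinates of v and supp(v) = {i : v_i ≠ 0}. Let C_n : Ω → Set ℝ^d be set-valued maps, t_n : Ω → ℝ^d maps with supp(t_n(ω)) = supp(β^t) for all ω, and m_n : Ω → ℝ^d maps such that whenever t_n(ω) ∈ C_n(ω), also m_n(ω) ∈ C_n(ω) and ‖m_n(ω)‖₀ ≤ ‖t_n(ω)‖₀. If the outer P-measure of the event E_n = {ω : t_n(ω) ∈ C_n(ω) and C_n(ω) ⊆ closedBall(β^t, δ)} converges to 1, then the outer P-measure of {ω : supp(m_n(ω)) = supp(β^t)} converges to 1 as n → ∞. -/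
import Mathlib

open MeasureTheory Filter Set Metric

/-- The ℓ₀ "norm" of a vector: the number of nonzero coordinates. -/
noncomputable def l0norm {d : ℕ} (v : EuclideanSpace ℝ (Fin d)) : ℕ :=
  (Finset.univ.filter (fun i => v i ≠ 0)).card

lemma abs_apply_le_norm {d : ℕ} (x : EuclideanSpace ℝ (Fin d)) (i : Fin d) :
    |x i| ≤ ‖x‖ := by
  rw [EuclideanSpace.norm_eq x]
  have h1 : |x i| = Real.sqrt (‖x i‖^2) := by
    rw [Real.sqrt_sq_eq_abs]; simp [Real.norm_eq_abs]
  rw [h1]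
  apply Real.sqrt_le_sqrt
  exact Finset.single_le_sum (f := fun j => ‖x j‖^2) (fun j _ => by positivity)
    (Finset.mem_univ i)

/-- Theorem 1(ii) (selection consistency of the CMC): if with probability
tending to one the region `C n ω` contains `t n ω` (supported exactly on the
support of `βt`) and is contained in `closedBall βt δ` with `δ < βs`, and the
CMC estimator `m n ω` lies in `C n ω` with ℓ₀ norm at most that of `t n ω`
whenever `t n ω ∈ C n ω`, then with probability tending to one the support of
`m n ω` equals the support of `βt`. -/
theorem cmc_selection_consistency {Ω : Type*} [MeasurableSpace Ω] (P : Measure Ω)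
    [IsProbabilityMeasure P] {d : ℕ} (hd : 1 ≤ d)
    (βt : EuclideanSpace ℝ (Fin d)) (hβt : ∃ i, βt i ≠ 0) (βs δ : ℝ)
    (hβs : IsLeast {x : ℝ | ∃ i, βt i ≠ 0 ∧ x = |βt i|} βs)
    (hδ0 : 0 < δ) (hδ : δ < βs)
    (C : ℕ → Ω → Set (EuclideanSpace ℝ (Fin d)))
    (t : ℕ → Ω → EuclideanSpace ℝ (Fin d))
    (ht : ∀ n ω, {i | t n ω i ≠ 0} = {i | βt i ≠ 0})
    (m : ℕ → Ω → EuclideanSpace ℝ (Fin d))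
    (hm : ∀ n ω, t n ω ∈ C n ω → m n ω ∈ C n ω ∧ l0norm (m n ω) ≤ l0norm (t n ω))
    (hE : Tendsto
      (fun n : ℕ => P {ω | t n ω ∈ C n ω ∧ C n ω ⊆ closedBall βt δ})
      atTop (nhds 1)) :
    Tendsto (fun n : ℕ => P {ω | {i | m n ω i ≠ 0} = {i | βt i ≠ 0}})
      atTop (nhds 1) := by
  -- pointwise: on the event E_n, the support of m equals that of βt
  have key : ∀ n ω, (t n ω ∈ C n ω ∧ C n ω ⊆ closedBall βt δ) →
      {i | m n ω i ≠ 0} = {i | βt i ≠ 0} := by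
    intro n ω ⟨htC, hCB⟩
    obtain ⟨hmC, hml0⟩ := hm n ω htC
    -- supports as finsets
    classical
    set Sm := Finset.univ.filter (fun i => m n ω i ≠ 0) with hSm
    set Sb := Finset.univ.filter (fun i => βt i ≠ 0) with hSb
    have hsub : Sb ⊆ Sm := by
      intro i hi
      simp only [hSb, Finset.mem_filter, Finset.mem_univ, true_and] at hi
      simp only [hSm, Finset.mem_filter, Finset.mem_univ, true_and]
      intro hmi
      have hdist : dist (m n ω) βt ≤ δ := hCB hmC
      have hcoord : |m n ω i - βt i| ≤ δ := by
        have := abs_apply_le_norm (m n ω - βt) i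
        simpa [dist_eq_norm] using this.trans (by rwa [← dist_eq_norm])
      have hlb : βs ≤ |βt i| := hβs.2 ⟨i, hi, rfl⟩
      rw [hmi, zero_sub, abs_neg] at hcoord
      linarith
    have hcard : Sm.card ≤ Sb.card := by
      have hteq : l0norm (t n ω) = Sb.card := by
        unfold l0norm
        congr 1
        apply Finset.filter_congr
        intro i _
        have := ht n ω
        constructor
        · intro h; exact (Set.ext_iff.mp this i).mp h
        · intro h; exact (Set.ext_iff.mp this i).mpr h
      have h2 : l0norm (m n ω) ≤ Sb.card := hteq ▸ hml0
      simpa [l0norm, hSm] using h2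
    have heq : Sb = Sm := Finset.eq_of_subset_of_card_le hsub hcard
    ext i
    simp only [Set.mem_setOf_eq]
    have : i ∈ Sm ↔ i ∈ Sb := by rw [heq]
    simpa [hSm, hSb] using this
  -- measure comparison
  have hmono : ∀ n, P {ω | t n ω ∈ C n ω ∧ C n ω ⊆ closedBall βt δ}
      ≤ P {ω | {i | m n ω i ≠ 0} = {i | βt i ≠ 0}} := by
    intro n
    apply measure_mono
    intro ω hω
    exact key n ω hω
  refine tendsto_of_tendsto_of_tendsto_of_le_of_le hE tendsto_const_nhds hmono
    (fun n => prob_le_one)
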